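/- arXiv:1207.1256 — 6 statements merged into one kernel-verified Lean document; each statement's English description precedes it below -/
import Mathlib

section
/- For every real ν > 0 and every real x > 0, the chi-squared cumulative distribution functions satisfy F_{ν+4}(x)·F_ν(x)/F_{ν+2}(x)² > (ν+2)/(ν+4). -/
/-!
Write `M_p(x) = ∫₀ˣ t ^ p e^{-t/2} dt`, so that `F_ν = M_{ν/2-1} / (2^{ν/2} Γ(ν/2))`
and, with `q = ν/2 - 1`, the claim becomes the Turán-type inequality
`((ν+2) M_{q+1})² < ν M_q · (ν+4) M_{q+2}`.
Integration by parts gives `2(p+1) M_p = M_{p+1} + E_{p+1}` with boundary term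
`E_p = 2 x^p e^{-x/2}`. The moments are strictly log-convex in `p` (Cauchy–Schwarz:
`M_{p+1}² < M_p M_{p+2}`) and the boundary terms are log-linear (`E_{p+1}² = E_p E_{p+2}`),
so their sums `2(p+1) M_p` are again strictly log-convex, which is the claim.
-/

open Real

/-- Chi-squared cumulative distribution function with `ν` degrees of freedom. -/
noncomputable def chiCDF (ν x : ℝ) : ℝ :=
  ((2 : ℝ) ^ (ν / 2) * Real.Gamma (ν / 2))⁻¹ *
    ∫ t in (0 : ℝ)..x, t ^ (ν / 2 - 1) * Real.exp (-t / 2)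

open MeasureTheory Set intervalIntegral
open scoped Interval

noncomputable def chiMoment (p x : ℝ) : ℝ :=
  ∫ t in (0 : ℝ)..x, t ^ p * exp (-t / 2)

lemma intervalIntegrable_rpow_mul_exp {p : ℝ} (hp : -1 < p) (a b : ℝ) :
    IntervalIntegrable (fun t : ℝ => t ^ p * exp (-t / 2)) volume a b :=
  (intervalIntegrable_rpow' hp).mul_continuousOn (by fun_prop)

lemma chiMoment_pos {p x : ℝ} (hp : -1 < p) (hx : 0 < x) : 0 < chiMoment p x :=
  intervalIntegral_pos_of_pos_on (intervalIntegrable_rpow_mul_exp hp 0 x)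
    (fun t ht => by have := ht.1; positivity) hx

lemma chiMoment_add_natCast (p x : ℝ) (n : ℕ) :
    chiMoment (p + n) x = ∫ t in (0 : ℝ)..x, t ^ n * (t ^ p * exp (-t / 2)) := by
  refine intervalIntegral.integral_congr_ae ?_
  filter_upwards [volume.ae_ne 0] with t ht _
  rw [rpow_add_natCast ht]
  ring

lemma chiMoment_add_one {p : ℝ} (hp : -1 < p) (x : ℝ) :
    chiMoment (p + 1) x = 2 * (p + 1) * chiMoment p x - 2 * x ^ (p + 1) * exp (-x / 2) := by
  have hint := intervalIntegrable_rpow_mul_exp hp 0 x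
  have hint' := intervalIntegrable_rpow_mul_exp (p := p + 1) (by linarith) 0 x
  have hcont : Continuous fun t : ℝ => -2 * t ^ (p + 1) * exp (-t / 2) := by
    have := continuous_rpow_const (q := p + 1) (by linarith)
    fun_prop
  have hderiv : ∀ t : ℝ, t ≠ 0 → HasDerivAt (fun t : ℝ => -2 * t ^ (p + 1) * exp (-t / 2))
      (t ^ (p + 1) * exp (-t / 2) - 2 * (p + 1) * (t ^ p * exp (-t / 2))) t := by
    intro t ht
    have hpow := (hasDerivAt_rpow_const (p := p + 1) (Or.inl ht)).const_mul (-2 : ℝ)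
    have hexp := ((hasDerivAt_id' t).fun_neg.div_const 2).exp
    refine (hpow.fun_mul hexp).congr_deriv ?_
    rw [add_sub_cancel_right]
    ring
  have hne : ∀ t ∈ Ioo (min 0 x) (max 0 x), t ≠ 0 := by
    rintro t ht rfl
    rcases le_total 0 x with h | h <;> simp_all
  have hFTC := integral_eq_sub_of_hasDeriv_right hcont.continuousOn
    (fun t ht => (hderiv t (hne t ht)).hasDerivWithinAt) (hint'.sub (hint.const_mul _))
  rw [intervalIntegral.integral_sub hint' (hint.const_mul _),
    intervalIntegral.integral_const_mul, zero_rpow (by linarith)] at hFTC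
  simp only [chiMoment]
  linarith

lemma sq_integral_id_mul_lt {w : ℝ → ℝ} {a b : ℝ} (hab : a < b)
    (hw : IntervalIntegrable w volume a b) (hpos : ∀ t ∈ Ioo a b, 0 < w t) :
    (∫ t in a..b, t * w t) ^ 2 < (∫ t in a..b, w t) * ∫ t in a..b, t ^ 2 * w t := by
  set A := ∫ t in a..b, w t
  set B := ∫ t in a..b, t * w t
  set C := ∫ t in a..b, t ^ 2 * w t
  have hA : 0 < A := intervalIntegral_pos_of_pos_on hw hpos hab
  have hw1 : IntervalIntegrable (fun t => t * w t) volume a b :=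
    hw.continuousOn_mul continuousOn_id
  have hw2 : IntervalIntegrable (fun t => t ^ 2 * w t) volume a b :=
    hw.continuousOn_mul (continuousOn_pow 2)
  set m := B / A
  have hvar : ∫ t in a..b, (t - m) ^ 2 * w t = C - 2 * m * B + m ^ 2 * A := by
    rw [← intervalIntegral.integral_const_mul, ← intervalIntegral.integral_const_mul,
      ← intervalIntegral.integral_sub hw2 (hw1.const_mul _),
      ← intervalIntegral.integral_add (hw2.sub (hw1.const_mul _)) (hw.const_mul _)]
    congr 1 with t
    ring
  have hvar_pos : 0 < ∫ t in a..b, (t - m) ^ 2 * w t := by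
    have hnonneg : 0 ≤ᵐ[volume.restrict (Ι a b)] fun t => (t - m) ^ 2 * w t := by
      rw [uIoc_of_le hab.le]
      refine ae_restrict_of_ae_eq_of_ae_restrict Ioo_ae_eq_Ioc ?_
      filter_upwards [ae_restrict_mem measurableSet_Ioo] with t ht
      have := hpos t ht
      positivity
    rw [integral_pos_iff_support_of_nonneg_ae' hnonneg
      (hw.continuousOn_mul (by fun_prop))]
    refine ⟨hab, ?_⟩
    calc (0 : ENNReal) < volume (Ioo a b \ {m}) := by
          rw [measure_sdiff_null (measure_singleton m), Real.volume_Ioo]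
          simpa using hab
      _ ≤ volume (Function.support (fun t => (t - m) ^ 2 * w t) ∩ Ioc a b) :=
          measure_mono fun t ⟨ht, htm⟩ =>
          ⟨mul_ne_zero (pow_ne_zero _ (sub_ne_zero.2 htm)) (hpos t ht).ne',
            Ioo_subset_Ioc_self ht⟩
  have hmA : m * A = B := div_mul_cancel₀ B hA.ne'
  nlinarith

lemma chiMoment_sq_lt {p x : ℝ} (hp : -1 < p) (hx : 0 < x) :
    chiMoment (p + 1) x ^ 2 < chiMoment p x * chiMoment (p + 2) x := by
  have h1 := chiMoment_add_natCast p x 1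
  have h2 := chiMoment_add_natCast p x 2
  push_cast at h1 h2
  simp only [pow_one] at h1
  rw [h1, h2, chiMoment]
  exact sq_integral_id_mul_lt hx (intervalIntegrable_rpow_mul_exp hp 0 x)
    (fun t ht => by have := ht.1; positivity)

lemma sq_add_lt_mul_add_mul {a b c d e f : ℝ} (ha : 0 ≤ a) (hc : 0 ≤ c) (hd : 0 ≤ d)
    (hf : 0 ≤ f) (hb : b ^ 2 < a * c) (he : e ^ 2 = d * f) :
    (b + e) ^ 2 < (a + d) * (c + f) := by
  have hcross : 2 * (b * e) ≤ a * f + d * c := by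
    have hsq : (2 * (b * e)) ^ 2 ≤ (a * f + d * c) ^ 2 := by
      nlinarith [sq_nonneg (a * f - d * c), sq_nonneg e, mul_nonneg ha hc]
    exact abs_le_of_sq_le_sq' hsq (by positivity) |>.2
  nlinarith

theorem chiMoment_turan {p x : ℝ} (hp : -1 < p) (hx : 0 < x) :
    (2 * (p + 2) * chiMoment (p + 1) x) ^ 2
      < 2 * (p + 1) * chiMoment p x * (2 * (p + 3) * chiMoment (p + 2) x) := by
  have r1 := chiMoment_add_one hp x
  have r2 := chiMoment_add_one (p := p + 1) (by linarith) x
  have r3 := chiMoment_add_one (p := p + 2) (by linarith) x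
  have hcs := chiMoment_sq_lt (p := p + 1) (by linarith) hx
  rw [show p + 1 + 1 = p + 2 by ring] at r2 hcs
  rw [show p + 2 + 1 = p + 3 by ring] at r3
  rw [show p + 1 + 2 = p + 3 by ring] at hcs
  have hE : (2 * x ^ (p + 2) * exp (-x / 2)) ^ 2
      = 2 * x ^ (p + 1) * exp (-x / 2) * (2 * x ^ (p + 3) * exp (-x / 2)) := by
    have : x ^ (p + 2) * x ^ (p + 2) = x ^ (p + 1) * x ^ (p + 3) := by
      rw [← rpow_add hx, ← rpow_add hx]; ring_nf
    linear_combination (4 * exp (-x / 2) ^ 2) * this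
  calc (2 * (p + 2) * chiMoment (p + 1) x) ^ 2
      = (chiMoment (p + 2) x + 2 * x ^ (p + 2) * exp (-x / 2)) ^ 2 := by rw [r2]; ring
    _ < (chiMoment (p + 1) x + 2 * x ^ (p + 1) * exp (-x / 2))
          * (chiMoment (p + 3) x + 2 * x ^ (p + 3) * exp (-x / 2)) :=
      sq_add_lt_mul_add_mul (chiMoment_pos (by linarith) hx).le
        (chiMoment_pos (by linarith) hx).le (by positivity) (by positivity) hcs hE
    _ = 2 * (p + 1) * chiMoment p x * (2 * (p + 3) * chiMoment (p + 2) x) := by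
      rw [r1, r3]; ring

noncomputable def chiNormalizer (ν : ℝ) : ℝ := 2 ^ (ν / 2) * Gamma (ν / 2)

lemma chiNormalizer_pos {ν : ℝ} (hν : 0 < ν) : 0 < chiNormalizer ν :=
  mul_pos (rpow_pos_of_pos two_pos _) (Gamma_pos_of_pos (by linarith))

lemma chiNormalizer_add_two {ν : ℝ} (hν : ν ≠ 0) :
    chiNormalizer (ν + 2) = ν * chiNormalizer ν := by
  rw [chiNormalizer, chiNormalizer, add_div, div_self two_ne_zero, rpow_add_one two_ne_zero,
    Gamma_add_one (by simpa using hν)]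
  field_simp

lemma chiCDF_eq_div (ν x : ℝ) : chiCDF ν x = chiMoment (ν / 2 - 1) x / chiNormalizer ν :=
  inv_mul_eq_div _ _

/-- For every real ν > 0 and every real x > 0,
`F_{ν+4}(x)·F_ν(x)/F_{ν+2}(x)² > (ν+2)/(ν+4)`. -/
theorem chiCDF_ratio_gt (ν x : ℝ) (hν : 0 < ν) (hx : 0 < x) :
    chiCDF (ν + 4) x * chiCDF ν x / (chiCDF (ν + 2) x) ^ 2 > (ν + 2) / (ν + 4) := by
  set q := ν / 2 - 1 with hq
  have hq1 : -1 < q := by linarith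
  have hM := chiMoment_pos hq1 hx
  have hM1 := chiMoment_pos (p := q + 1) (by linarith) hx
  have hC := chiNormalizer_pos hν
  have hturan := chiMoment_turan hq1 hx
  rw [show ν + 4 = ν + 2 + 2 by ring, chiCDF_eq_div, chiCDF_eq_div, chiCDF_eq_div,
    chiNormalizer_add_two (by linarith), chiNormalizer_add_two hν.ne',
    show (ν + 2 + 2) / 2 - 1 = q + 2 by ring, show (ν + 2) / 2 - 1 = q + 1 by ring, ← hq]
  rw [show 2 * (q + 1) = ν by ring, show 2 * (q + 2) = ν + 2 by ring,
    show 2 * (q + 3) = ν + 2 + 2 by ring] at hturan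
  clear_value q
  rw [gt_iff_lt, div_lt_div_iff₀ (by linarith) (by positivity)]
  field_simp
  nlinarith
end

section
/- For every integer v ≥ 1 and every real x > 0, det J(x) = (F_{v+4}(x)/F_v(x))^{v-1} · [ (v/2 + 1)·F_{v+4}(x)/F_v(x) − (v/2)·F_{v+2}(x)²/F_v(x)² ]. -/
open Real

/-- The `v×v` matrix `J(x)` with entries
`J_{kj}(x) = (1/2)·[(1 + 2δ_{kj})·F_{v+4}(x)/F_v(x) − F_{v+2}(x)²/F_v(x)²]`. -/
noncomputable def Jmat (v : ℕ) (x : ℝ) : Matrix (Fin v) (Fin v) ℝ :=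
  Matrix.of fun k j =>
    (1 / 2) * ((1 + 2 * (if k = j then (1 : ℝ) else 0)) * chiCDF (v + 4) x / chiCDF v x
      - (chiCDF (v + 2) x) ^ 2 / (chiCDF v x) ^ 2)

/-- Determinant of `a` on the diagonal plus a constant `d` everywhere. -/
lemma det_diag_add_const (n : ℕ) (hn : 1 ≤ n) (a d : ℝ) :
    (Matrix.of fun k j : Fin n => (if k = j then a else 0) + d).det
      = a ^ (n - 1) * (a + n * d) := by
  rcases eq_or_ne a 0 with rfl | ha
  · rcases eq_or_lt_of_le hn with h1 | h2
    · subst h1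
      simp [Matrix.det_fin_one]
    · have h01 : (⟨0, by omega⟩ : Fin n) ≠ ⟨1, by omega⟩ := by
        simp [Fin.ext_iff]
      rw [Matrix.det_zero_of_row_eq h01 (by
        funext j; simp [Fin.ext_iff, Matrix.of_apply])]
      rw [zero_pow (by omega)]
      ring
  · have key : (Matrix.of fun k j : Fin n => (if k = j then a else 0) + d)
        = a • (1 + Matrix.replicateCol Unit (fun _ => d / a) * Matrix.replicateRow Unit (fun _ => (1 : ℝ))) := by
      ext k j
      simp [Matrix.mul_apply, Matrix.one_apply, mul_add]
      rcases eq_or_ne k j with rfl | hkj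
      · simp [mul_div_cancel₀ _ ha]
      · simp [hkj, mul_div_cancel₀ _ ha]
    rw [key, Matrix.det_smul, Matrix.det_one_add_replicateCol_mul_replicateRow]
    simp only [dotProduct, Finset.sum_const, Finset.card_univ, Fintype.card_fin,
      nsmul_eq_mul, one_mul, smul_eq_mul]
    have hpow : a ^ n = a ^ (n - 1) * a := by
      conv_lhs => rw [show n = (n - 1) + 1 by omega]
      rw [pow_succ]
    rw [hpow]
    field_simp

/-- `det J(x) = (F_{v+4}/F_v)^{v-1}·[(v/2+1)·F_{v+4}/F_v − (v/2)·F_{v+2}²/F_v²]`. -/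
theorem det_Jmat (v : ℕ) (hv : 1 ≤ v) (x : ℝ) (hx : 0 < x) :
    (Jmat v x).det = (chiCDF (v + 4) x / chiCDF v x) ^ (v - 1) *
      (((v : ℝ) / 2 + 1) * chiCDF (v + 4) x / chiCDF v x
        - ((v : ℝ) / 2) * (chiCDF (v + 2) x) ^ 2 / (chiCDF v x) ^ 2) := by
  set a : ℝ := chiCDF (v + 4) x / chiCDF v x with ha
  set r : ℝ := (chiCDF (v + 2) x) ^ 2 / (chiCDF v x) ^ 2 with hr
  have hJ : Jmat v x
      = Matrix.of fun k j : Fin v => (if k = j then a else 0) + (1 / 2) * (a - r) := by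
    ext k j
    simp only [Jmat, Matrix.of_apply, mul_div_assoc, ← ha, ← hr]
    split_ifs <;> ring
  rw [hJ, det_diag_add_const v hv]
  have h1 : ((v : ℝ) / 2 + 1) * chiCDF (v + 4) x / chiCDF v x = ((v : ℝ) / 2 + 1) * a := by
    rw [ha, mul_div_assoc]
  have h2 : ((v : ℝ) / 2) * (chiCDF (v + 2) x) ^ 2 / (chiCDF v x) ^ 2 = ((v : ℝ) / 2) * r := by
    rw [hr, mul_div_assoc]
  rw [h1, h2]
  ring
end

section
/- For every integer v ≥ 1 and every real x > 0, det J(x) > (2/(v+4)) · (F_{v+4}(x)/F_v(x))^{v-1} · F_{v+2}(x)²/F_v(x)²; in particular det J(x) > 0. -/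
open Real

/-!
Write `F_ν = G_{ν/2} / (2^{ν/2} Γ(ν/2))` with `G_a(x) = ∫₀ˣ t^{a-1} e^{-t/2} dt`
(`chiIntegral`). With `A = F_{v+4}/F_v` and `B = F_{v+2}²/F_v²` the matrix is
`J = ((A - B)/2) 𝟙𝟙ᵀ + A I`, so `det J = A^{v-1} (A + v (A - B)/2)`, and the bound is equivalent
to `(v+2)/(v+4) · B < A`, i.e. to the Turán-type inequality
`(a+1)² G_{a+1}² < a (a+2) G_a G_{a+2}` for `a = v/2`.

Its defect `H = turanGap a` vanishes at `0`, and with `k = chiKernel a` one finds `H' = k K`,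
`K' = 2 L`, `L' = M`, `M' = k · y (4a + 6 - y)/4`, where `K`, `L`, `M` vanish at `0` as well.
So `M > 0`: for `y ≤ 2a + 4` because `M` increases on `[0, y]`, beyond that because both of its
terms are positive. Positivity then climbs back up from `M` to `H`.
-/

open Set MeasureTheory intervalIntegral Matrix

lemma pos_of_hasDerivAt_pos {f f' : ℝ → ℝ} {z : ℝ} (hz : 0 < z)
    (hf : ContinuousOn f (Icc 0 z)) (h0 : f 0 = 0) (hf' : ∀ y ∈ Ioo 0 z, HasDerivAt f (f' y) y)
    (hpos : ∀ y ∈ Ioo 0 z, 0 < f' y) : 0 < f z := by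
  have hmono : StrictMonoOn f (Icc 0 z) :=
    strictMonoOn_of_deriv_pos (convex_Icc 0 z) hf fun y hy => by
      rw [interior_Icc] at hy
      rw [(hf' y hy).deriv]
      exact hpos y hy
  simpa [h0] using hmono (left_mem_Icc.2 hz.le) (right_mem_Icc.2 hz.le) hz

theorem Matrix.det_const_add_smul_one {ι K : Type*} [Fintype ι] [DecidableEq ι] [Nonempty ι]
    [Field K] (c : K) {d : K} (hd : d ≠ 0) :
    (of (fun _ _ => c) + d • 1 : Matrix ι ι K).det
      = d ^ (Fintype.card ι - 1) * (d + Fintype.card ι * c) := by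
  have hM : (of (fun _ _ => c) + d • 1 : Matrix ι ι K)
      = d • (1 + replicateCol Unit (fun _ : ι => c / d) *
          replicateRow Unit (fun _ : ι => (1 : K))) := by
    ext i j
    simp [Matrix.one_apply, mul_apply, mul_add, mul_div_cancel₀ c hd, add_comm]
  have hcard : d ^ Fintype.card ι = d ^ (Fintype.card ι - 1) * d := by
    rw [← pow_succ, Nat.sub_add_cancel Fintype.card_pos]
  rw [hM, det_smul, det_one_add_replicateCol_mul_replicateRow, hcard]
  simp only [dotProduct, one_mul, Finset.sum_const, Finset.card_univ, nsmul_eq_mul]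
  field_simp

noncomputable def chiKernel (a t : ℝ) : ℝ := t ^ (a - 1) * exp (-t / 2)

noncomputable def chiIntegral (a x : ℝ) : ℝ := ∫ t in (0 : ℝ)..x, chiKernel a t

lemma chiKernel_pos (a : ℝ) {t : ℝ} (ht : 0 < t) : 0 < chiKernel a t := by
  unfold chiKernel; positivity

lemma chiKernel_add_one_eq (a : ℝ) : chiKernel (a + 1) = fun t => t ^ a * exp (-t / 2) := by
  ext t; simp [chiKernel]

lemma chiKernel_add_one (a : ℝ) {t : ℝ} (ht : 0 < t) :
    chiKernel (a + 1) t = t * chiKernel a t := by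
  rw [chiKernel_add_one_eq, chiKernel, rpow_sub_one ht.ne']
  field_simp

lemma chiKernel_add_two (a : ℝ) {t : ℝ} (ht : 0 < t) :
    chiKernel (a + 2) t = t ^ 2 * chiKernel a t := by
  rw [show a + 2 = a + 1 + 1 by ring, chiKernel_add_one _ ht, chiKernel_add_one _ ht]
  ring

lemma continuous_chiKernel {a : ℝ} (ha : 1 ≤ a) : Continuous (chiKernel a) :=
  (continuous_rpow_const (by linarith)).mul (by fun_prop)

lemma hasDerivAt_chiKernel_add_one (a : ℝ) {y : ℝ} (hy : 0 < y) :
    HasDerivAt (chiKernel (a + 1)) ((a - y / 2) * chiKernel a y) y := by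
  have hexp : HasDerivAt (fun t => exp (-t / 2)) (exp (-y / 2) * (-1 / 2)) y :=
    ((hasDerivAt_neg y).div_const 2).exp
  rw [chiKernel_add_one_eq]
  refine ((hasDerivAt_rpow_const (p := a) (Or.inl hy.ne')).mul hexp).congr_deriv ?_
  rw [chiKernel, rpow_sub_one hy.ne']
  field_simp
  ring

lemma chiKernel_zero {a : ℝ} (ha : 1 < a) : chiKernel a 0 = 0 := by
  simp [chiKernel, zero_rpow (sub_pos.2 ha).ne']

lemma intervalIntegrable_chiKernel {a : ℝ} (ha : 0 < a) (x y : ℝ) :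
    IntervalIntegrable (chiKernel a) volume x y :=
  (intervalIntegrable_rpow' (by linarith)).mul_continuousOn (by fun_prop)

lemma continuous_chiIntegral {a : ℝ} (ha : 0 < a) : Continuous (chiIntegral a) :=
  continuous_primitive (intervalIntegrable_chiKernel ha) 0

lemma chiIntegral_zero (a : ℝ) : chiIntegral a 0 = 0 := integral_same

lemma chiIntegral_pos {a : ℝ} (ha : 0 < a) {x : ℝ} (hx : 0 < x) : 0 < chiIntegral a x :=
  intervalIntegral_pos_of_pos_on (intervalIntegrable_chiKernel ha 0 x)
    (fun _ ht => chiKernel_pos a ht.1) hx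

lemma hasDerivAt_chiIntegral {a : ℝ} (ha : 0 < a) {y : ℝ} (hy : 0 < y) :
    HasDerivAt (chiIntegral a) (chiKernel a y) y :=
  integral_hasDerivAt_right (intervalIntegrable_chiKernel ha 0 y)
    (Measurable.aestronglyMeasurable (by unfold chiKernel; fun_prop)).stronglyMeasurableAtFilter
    ((continuousAt_rpow_const _ _ (Or.inl hy.ne')).mul (by fun_prop))

noncomputable def turanGap (a y : ℝ) : ℝ :=
  a * (a + 2) * chiIntegral a y * chiIntegral (a + 2) y - (a + 1) ^ 2 * chiIntegral (a + 1) y ^ 2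

noncomputable def turanGapK (a y : ℝ) : ℝ :=
  a * (a + 2) * (chiIntegral (a + 2) y + y ^ 2 * chiIntegral a y)
    - 2 * (a + 1) ^ 2 * y * chiIntegral (a + 1) y

noncomputable def turanGapL (a y : ℝ) : ℝ :=
  a * (a + 2) * y * chiIntegral a y - (a + 1) ^ 2 * chiIntegral (a + 1) y - chiKernel (a + 2) y

noncomputable def turanGapM (a y : ℝ) : ℝ :=
  a * (a + 2) * chiIntegral a y + (y / 2 - (a + 2)) * chiKernel (a + 1) y

section TuranGap

variable {a y : ℝ}

lemma hasDerivAt_turanGap (ha : 0 < a) (hy : 0 < y) :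
    HasDerivAt (turanGap a) (chiKernel a y * turanGapK a y) y := by
  have h0 := hasDerivAt_chiIntegral ha hy
  have h1 := hasDerivAt_chiIntegral (by linarith : 0 < a + 1) hy
  have h2 := hasDerivAt_chiIntegral (by linarith : 0 < a + 2) hy
  refine ((h0.const_mul (a * (a + 2))).mul h2 |>.sub
    ((h1.pow 2).const_mul ((a + 1) ^ 2))).congr_deriv ?_
  rw [chiKernel_add_one a hy, chiKernel_add_two a hy, turanGapK]
  ring

lemma hasDerivAt_turanGapK (ha : 0 < a) (hy : 0 < y) :
    HasDerivAt (turanGapK a) (2 * turanGapL a y) y := by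
  have h0 := hasDerivAt_chiIntegral ha hy
  have h1 := hasDerivAt_chiIntegral (by linarith : 0 < a + 1) hy
  have h2 := hasDerivAt_chiIntegral (by linarith : 0 < a + 2) hy
  refine ((h2.add ((hasDerivAt_pow 2 y).mul h0)).const_mul (a * (a + 2)) |>.sub
    (((hasDerivAt_id y).const_mul (2 * (a + 1) ^ 2)).mul h1)).congr_deriv ?_
  rw [chiKernel_add_one a hy, chiKernel_add_two a hy, turanGapL, chiKernel_add_two a hy]
  simp only [id]
  ring

lemma hasDerivAt_turanGapL (ha : 0 < a) (hy : 0 < y) :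
    HasDerivAt (turanGapL a) (turanGapM a y) y := by
  have h0 := hasDerivAt_chiIntegral ha hy
  have h1 := hasDerivAt_chiIntegral (by linarith : 0 < a + 1) hy
  have hk := hasDerivAt_chiKernel_add_one (a + 1) hy
  rw [show a + 1 + 1 = a + 2 by ring] at hk
  refine ((((hasDerivAt_id y).const_mul (a * (a + 2))).mul h0).sub (h1.const_mul ((a + 1) ^ 2))
    |>.sub hk).congr_deriv ?_
  rw [turanGapM, chiKernel_add_one a hy]
  simp only [id]
  ring

lemma hasDerivAt_turanGapM (ha : 0 < a) (hy : 0 < y) :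
    HasDerivAt (turanGapM a) (chiKernel a y * (y * (4 * a + 6 - y) / 4)) y := by
  have h0 := hasDerivAt_chiIntegral ha hy
  have hk := hasDerivAt_chiKernel_add_one a hy
  refine ((h0.const_mul (a * (a + 2))).add
    ((((hasDerivAt_id y).div_const 2).sub_const (a + 2)).mul hk)).congr_deriv ?_
  rw [chiKernel_add_one a hy]
  simp only [id]
  ring

lemma continuous_turanGap (ha : 0 < a) : Continuous (turanGap a) := by
  have := continuous_chiIntegral ha
  have := continuous_chiIntegral (by linarith : 0 < a + 1)
  have := continuous_chiIntegral (by linarith : 0 < a + 2)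
  unfold turanGap; fun_prop

lemma continuous_turanGapK (ha : 0 < a) : Continuous (turanGapK a) := by
  have := continuous_chiIntegral ha
  have := continuous_chiIntegral (by linarith : 0 < a + 1)
  have := continuous_chiIntegral (by linarith : 0 < a + 2)
  unfold turanGapK; fun_prop

lemma continuous_turanGapL (ha : 0 < a) : Continuous (turanGapL a) := by
  have := continuous_chiIntegral ha
  have := continuous_chiIntegral (by linarith : 0 < a + 1)
  have := continuous_chiKernel (by linarith : 1 ≤ a + 2)
  unfold turanGapL; fun_prop

lemma continuous_turanGapM (ha : 0 < a) : Continuous (turanGapM a) := by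
  have := continuous_chiIntegral ha
  have := continuous_chiKernel (by linarith : 1 ≤ a + 1)
  unfold turanGapM; fun_prop

lemma turanGapM_pos (ha : 0 < a) (hy : 0 < y) : 0 < turanGapM a y := by
  rcases le_or_gt y (2 * a + 4) with hle | hgt
  · refine pos_of_hasDerivAt_pos hy (continuous_turanGapM ha).continuousOn ?_
      (fun t ht => hasDerivAt_turanGapM ha ht.1) fun t ht => ?_
    · simp [turanGapM, chiIntegral_zero, chiKernel_zero (by linarith : 1 < a + 1)]
    · obtain ⟨ht0, hty⟩ := ht
      have hk := chiKernel_pos a ht0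
      have hfactor : 0 < 4 * a + 6 - t := by linarith
      positivity
  · exact add_pos (by have := chiIntegral_pos ha hy; positivity)
      (mul_pos (by linarith) (chiKernel_pos _ hy))

lemma turanGapL_pos (ha : 0 < a) (hy : 0 < y) : 0 < turanGapL a y :=
  pos_of_hasDerivAt_pos hy (continuous_turanGapL ha).continuousOn
    (by simp [turanGapL, chiIntegral_zero, chiKernel_zero (by linarith : 1 < a + 2)])
    (fun t ht => hasDerivAt_turanGapL ha ht.1) fun t ht => turanGapM_pos ha ht.1

lemma turanGapK_pos (ha : 0 < a) (hy : 0 < y) : 0 < turanGapK a y :=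
  pos_of_hasDerivAt_pos hy (continuous_turanGapK ha).continuousOn
    (by simp [turanGapK, chiIntegral_zero])
    (fun t ht => hasDerivAt_turanGapK ha ht.1) fun t ht => by linarith [turanGapL_pos ha ht.1]

lemma turanGap_pos (ha : 0 < a) (hy : 0 < y) : 0 < turanGap a y :=
  pos_of_hasDerivAt_pos hy (continuous_turanGap ha).continuousOn
    (by simp [turanGap, chiIntegral_zero])
    (fun t ht => hasDerivAt_turanGap ha ht.1)
    fun t ht => mul_pos (chiKernel_pos a ht.1) (turanGapK_pos ha ht.1)

end TuranGap

noncomputable def chiNorm (ν : ℝ) : ℝ := 2 ^ (ν / 2) * Gamma (ν / 2)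

lemma chiCDF_eq (ν x : ℝ) : chiCDF ν x = (chiNorm ν)⁻¹ * chiIntegral (ν / 2) x := rfl

lemma chiNorm_pos {ν : ℝ} (hν : 0 < ν) : 0 < chiNorm ν :=
  mul_pos (rpow_pos_of_pos two_pos _) (Gamma_pos_of_pos (half_pos hν))

lemma chiNorm_add_two {ν : ℝ} (hν : 0 < ν) : chiNorm (ν + 2) = ν * chiNorm ν := by
  rw [chiNorm, chiNorm, add_div, div_self two_ne_zero, rpow_add_one two_ne_zero,
    Gamma_add_one (half_pos hν).ne']
  ring

lemma chiCDF_pos {ν x : ℝ} (hν : 0 < ν) (hx : 0 < x) : 0 < chiCDF ν x :=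
  mul_pos (inv_pos.2 (chiNorm_pos hν)) (chiIntegral_pos (half_pos hν) hx)

lemma chiCDF_turan {ν x : ℝ} (hν : 0 < ν) (hx : 0 < x) :
    (ν + 2) / (ν + 4) * (chiCDF (ν + 2) x ^ 2 / chiCDF ν x ^ 2)
      < chiCDF (ν + 4) x / chiCDF ν x := by
  have hc := chiNorm_pos hν
  have hG := chiIntegral_pos (half_pos hν) hx
  have hgap := turanGap_pos (half_pos hν) hx
  have hdiff : chiCDF (ν + 4) x / chiCDF ν x
      - (ν + 2) / (ν + 4) * (chiCDF (ν + 2) x ^ 2 / chiCDF ν x ^ 2)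
      = 4 * turanGap (ν / 2) x / ((ν + 2) * (ν + 4) * ν ^ 2 * chiIntegral (ν / 2) x ^ 2) := by
    rw [chiCDF_eq, chiCDF_eq, chiCDF_eq, show ν + 4 = ν + 2 + 2 by ring,
      chiNorm_add_two (by linarith), chiNorm_add_two hν, turanGap,
      show (ν + 2) / 2 = ν / 2 + 1 by ring, show (ν + 2 + 2) / 2 = ν / 2 + 2 by ring]
    field_simp
    ring
  rw [← sub_pos, hdiff]
  positivity

lemma two_div_mul_lt_of_turan {n A B : ℝ} (hn : 0 ≤ n) (h : (n + 2) / (n + 4) * B < A) :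
    2 / (n + 4) * B < A + n * ((A - B) / 2) := by
  have hfactor : A + n * ((A - B) / 2) - 2 / (n + 4) * B
      = (n + 2) / 2 * (A - (n + 2) / (n + 4) * B) := by
    field_simp
    ring
  rw [← sub_pos, hfactor]
  exact mul_pos (by positivity) (sub_pos.2 h)

lemma Jmat_eq (v : ℕ) (x : ℝ) :
    Jmat v x = of (fun _ _ => (chiCDF (v + 4) x / chiCDF v x
      - chiCDF (v + 2) x ^ 2 / chiCDF v x ^ 2) / 2) + (chiCDF (v + 4) x / chiCDF v x) • 1 := by
  ext k j
  simp only [Jmat, of_apply, Matrix.add_apply, Matrix.smul_apply, one_apply, smul_eq_mul]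
  split_ifs <;> ring

/-- Lower bound for the determinant of `J(x)`, and its positivity. -/
theorem det_Jmat_lower_bound (v : ℕ) (hv : 1 ≤ v) (x : ℝ) (hx : 0 < x) :
    (Jmat v x).det > (2 / ((v : ℝ) + 4)) * (chiCDF (v + 4) x / chiCDF v x) ^ (v - 1) *
        ((chiCDF (v + 2) x) ^ 2 / (chiCDF v x) ^ 2)
      ∧ (Jmat v x).det > 0 := by
  have hv0 : (0 : ℝ) < v := by exact_mod_cast hv
  have : NeZero v := ⟨by omega⟩
  have hF0 : 0 < chiCDF v x := chiCDF_pos hv0 hx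
  have hF2 : 0 < chiCDF (v + 2) x := chiCDF_pos (by linarith) hx
  have hF4 : 0 < chiCDF (v + 4) x := chiCDF_pos (by linarith) hx
  rw [Jmat_eq]
  set A := chiCDF (v + 4) x / chiCDF v x
  set B := chiCDF (v + 2) x ^ 2 / chiCDF v x ^ 2
  have hA : 0 < A := div_pos hF4 hF0
  have hB : 0 < B := div_pos (pow_pos hF2 2) (pow_pos hF0 2)
  rw [det_const_add_smul_one _ hA.ne', Fintype.card_fin]
  have hbound : 2 / ((v : ℝ) + 4) * A ^ (v - 1) * B < A ^ (v - 1) * (A + v * ((A - B) / 2)) :=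
    calc 2 / ((v : ℝ) + 4) * A ^ (v - 1) * B = A ^ (v - 1) * (2 / ((v : ℝ) + 4) * B) := by ring
      _ < A ^ (v - 1) * (A + v * ((A - B) / 2)) :=
        mul_lt_mul_of_pos_left (two_div_mul_lt_of_turan hv0.le (chiCDF_turan hv0 hx)) (pow_pos hA _)
  exact ⟨hbound, lt_trans (by positivity) hbound⟩
end

section
/- For every integer v ≥ 1 and every real x > 0, the quantity (v+2)·F_{v+4}(x)/F_v(x) − v·F_{v+2}(x)²/F_v(x)² is strictly positive. -/
open Real MeasureTheory


lemma myInteg (p : ℝ) (hp : -1 < p) (x : ℝ) (hx : 0 ≤ x) :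
    IntervalIntegrable (fun t => t ^ p * Real.exp (-t/2)) volume 0 x := by
  apply (intervalIntegral.intervalIntegrable_rpow' hp (a := 0) (b := x)).mono_fun
  · exact ((measurable_id.pow_const p).mul
      ((measurable_id.neg.div_const 2).exp)).aestronglyMeasurable
  · filter_upwards [MeasureTheory.ae_restrict_mem measurableSet_uIoc] with t ht
    rw [Set.uIoc_of_le hx] at ht
    have h1 : (0:ℝ) ≤ t ^ p := Real.rpow_nonneg ht.1.le p
    have h2 : Real.exp (-t/2) ≤ 1 := by
      rw [Real.exp_le_one_iff]; linarith [ht.1.le]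
    simp only [norm_mul, Real.norm_eq_abs, abs_of_nonneg h1,
      abs_of_pos (Real.exp_pos _)]
    nlinarith [Real.exp_pos (-t/2)]

lemma myPos (p : ℝ) (hp : -1 < p) (x : ℝ) (hx : 0 < x) :
    0 < ∫ t in (0:ℝ)..x, t ^ p * Real.exp (-t/2) := by
  apply intervalIntegral.intervalIntegral_pos_of_pos_on (myInteg p hp x hx.le) _ hx
  intro t ht
  exact mul_pos (Real.rpow_pos_of_pos ht.1 p) (Real.exp_pos _)

lemma myKey (a : ℝ) (ha : -1 < a) (x : ℝ) (hx : 0 < x) :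
    (∫ t in (0:ℝ)..x, t ^ (a+1) * Real.exp (-t/2)) ^ 2
      < (∫ t in (0:ℝ)..x, t ^ a * Real.exp (-t/2))
        * (∫ t in (0:ℝ)..x, t ^ (a+2) * Real.exp (-t/2)) := by
  have ha1 : (-1:ℝ) < a + 1 := by linarith
  have ha2 : (-1:ℝ) < a + 2 := by linarith
  set f0 : ℝ → ℝ := fun t => t ^ a * Real.exp (-t/2) with hf0
  set f1 : ℝ → ℝ := fun t => t ^ (a+1) * Real.exp (-t/2) with hf1
  set f2 : ℝ → ℝ := fun t => t ^ (a+2) * Real.exp (-t/2) with hf2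
  set I0 : ℝ → ℝ := fun y => ∫ t in (0:ℝ)..y, f0 t with hI0
  set I1 : ℝ → ℝ := fun y => ∫ t in (0:ℝ)..y, f1 t with hI1
  set I2 : ℝ → ℝ := fun y => ∫ t in (0:ℝ)..y, f2 t with hI2
  set g : ℝ → ℝ := fun y => I0 y * I2 y - (I1 y) ^ 2 with hg
  have hcont : ∀ p : ℝ, -1 < p →
      ContinuousOn (fun y => ∫ t in (0:ℝ)..y, t ^ p * Real.exp (-t/2)) (Set.Icc 0 x) := by
    intro p hp
    have := intervalIntegral.continuousOn_primitive_interval'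
      (myInteg p hp x hx.le) (Set.left_mem_uIcc (a := (0:ℝ)) (b := x))
    rwa [Set.uIcc_of_le hx.le] at this
  have hgcont : ContinuousOn g (Set.Icc 0 x) :=
    (((hcont a ha).mul (hcont (a+2) ha2)).sub ((hcont (a+1) ha1).pow 2))
  have hderiv : ∀ y ∈ Set.Ioo (0:ℝ) x, 0 < deriv g y := by
    intro y hy
    have hy0 := hy.1
    have hd : ∀ p : ℝ, -1 < p → HasDerivAt (fun u => ∫ t in (0:ℝ)..u, t ^ p * Real.exp (-t/2))
        (y ^ p * Real.exp (-y/2)) y := by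
      intro p hp
      apply intervalIntegral.integral_hasDerivAt_right (myInteg p hp y hy0.le)
      · exact ((measurable_id.pow_const p).mul
          ((measurable_id.neg.div_const 2).exp)).aestronglyMeasurable.stronglyMeasurableAtFilter
      · exact (Real.continuousAt_rpow_const _ _ (Or.inl hy0.ne')).mul
          ((Real.continuous_exp.comp (continuous_neg.div_const 2)).continuousAt)
    have hg' : HasDerivAt g
        ((f0 y * I2 y + I0 y * f2 y) - 2 * I1 y ^ 1 * f1 y) y :=
      ((hd a ha).mul (hd (a+2) ha2)).sub ((hd (a+1) ha1).pow 2)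
    rw [hg'.deriv]
    have e1 : f1 y = y * f0 y := by
      simp only [hf1, hf0]
      rw [Real.rpow_add hy0, Real.rpow_one]; ring
    have e2 : f2 y = y ^ 2 * f0 y := by
      simp only [hf2, hf0]
      rw [show a + 2 = a + 1 + 1 by ring, Real.rpow_add hy0, Real.rpow_add hy0, Real.rpow_one]
      ring
    have hf0pos : 0 < f0 y := mul_pos (Real.rpow_pos_of_pos hy0 a) (Real.exp_pos _)
    have hIcomb : 0 < I2 y + y ^ 2 * I0 y - 2 * y * I1 y := by
      have hint0 := myInteg a ha y hy0.le
      have hint1 := myInteg (a+1) ha1 y hy0.le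
      have hint2 := myInteg (a+2) ha2 y hy0.le
      have lin : I2 y + y ^ 2 * I0 y - 2 * y * I1 y
          = ∫ t in (0:ℝ)..y, (f2 t + y ^ 2 * f0 t - 2 * y * f1 t) := by
        rw [intervalIntegral.integral_sub (hint2.add (hint0.const_mul _)) (hint1.const_mul _),
          intervalIntegral.integral_add hint2 (hint0.const_mul _),
          intervalIntegral.integral_const_mul, intervalIntegral.integral_const_mul]
      rw [lin]
      apply intervalIntegral.intervalIntegral_pos_of_pos_on
        ((hint2.add (hint0.const_mul _)).sub (hint1.const_mul _)) _ hy0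
      intro t ht
      have ht0 := ht.1
      have e1t : f1 t = t * f0 t := by
        simp only [hf1, hf0]
        rw [Real.rpow_add ht0, Real.rpow_one]; ring
      have e2t : f2 t = t ^ 2 * f0 t := by
        simp only [hf2, hf0]
        rw [show a + 2 = a + 1 + 1 by ring, Real.rpow_add ht0, Real.rpow_add ht0, Real.rpow_one]
        ring
      have hf0t : 0 < f0 t := mul_pos (Real.rpow_pos_of_pos ht0 a) (Real.exp_pos _)
      have hty : t ≠ y := ne_of_lt ht.2
      have : f2 t + y ^ 2 * f0 t - 2 * y * f1 t = f0 t * (t - y) ^ 2 := by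
        rw [e1t, e2t]; ring
      rw [this]
      have h2 : (0:ℝ) < (t - y) ^ 2 := by nlinarith [ht.2]
      exact mul_pos hf0t h2
    rw [e1, e2]
    nlinarith
  have hmono : StrictMonoOn g (Set.Icc 0 x) := by
    apply strictMonoOn_of_deriv_pos (convex_Icc 0 x) hgcont
    rwa [interior_Icc]
  have h0 : g 0 = 0 := by
    simp [hg, hI0, hI1, hI2]
  have := hmono (Set.left_mem_Icc.mpr hx.le) (Set.right_mem_Icc.mpr hx.le) hx
  rw [h0] at this
  simp only [hg] at this
  linarith

/-- `(v+2)·F_{v+4}(x)/F_v(x) − v·F_{v+2}(x)²/F_v(x)² > 0`. -/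
theorem chiCDF_combination_pos (v : ℕ) (hv : 1 ≤ v) (x : ℝ) (hx : 0 < x) :
    0 < ((v : ℝ) + 2) * chiCDF (v + 4) x / chiCDF v x
      - (v : ℝ) * (chiCDF (v + 2) x) ^ 2 / (chiCDF v x) ^ 2 := by
  have hv1 : (1:ℝ) ≤ (v:ℝ) := by exact_mod_cast hv
  have hvpos : (0:ℝ) < v := by linarith
  set a : ℝ := (v:ℝ)/2 - 1 with haa
  have ha : -1 < a := by rw [haa]; linarith
  have hΓ : 0 < Real.Gamma ((v:ℝ)/2) := Real.Gamma_pos_of_pos (by linarith)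
  set c : ℝ := (2:ℝ)^((v:ℝ)/2) * Real.Gamma ((v:ℝ)/2) with hc
  have hcpos : 0 < c := mul_pos (Real.rpow_pos_of_pos two_pos _) hΓ
  set A : ℝ := ∫ t in (0:ℝ)..x, t ^ a * Real.exp (-t/2) with hA
  set B : ℝ := ∫ t in (0:ℝ)..x, t ^ (a+1) * Real.exp (-t/2) with hB
  set C : ℝ := ∫ t in (0:ℝ)..x, t ^ (a+2) * Real.exp (-t/2) with hC
  have hApos : 0 < A := myPos a ha x hx
  have key : B ^ 2 < A * C := myKey a ha x hx
  have eA : chiCDF v x = c⁻¹ * A := by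
    rw [chiCDF, ← haa, ← hc, ← hA]
  have eB : chiCDF (v + 2) x = ((v:ℝ) * c)⁻¹ * B := by
    have e1 : ((v:ℝ)+2)/2 - 1 = a + 1 := by rw [haa]; ring
    have e2 : ((v:ℝ)+2)/2 = (v:ℝ)/2 + 1 := by ring
    have hconst : (2:ℝ)^(((v:ℝ)+2)/2) * Real.Gamma (((v:ℝ)+2)/2) = (v:ℝ) * c := by
      rw [e2, Real.Gamma_add_one (by positivity), Real.rpow_add two_pos, Real.rpow_one, hc]
      ring
    rw [chiCDF, e1, hconst, ← hB]
  have eC : chiCDF (v + 4) x = ((v:ℝ) * ((v:ℝ)+2) * c)⁻¹ * C := by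
    have e1 : ((v:ℝ)+4)/2 - 1 = a + 2 := by rw [haa]; ring
    have e2 : ((v:ℝ)+4)/2 = ((v:ℝ)/2 + 1) + 1 := by ring
    have hconst : (2:ℝ)^(((v:ℝ)+4)/2) * Real.Gamma (((v:ℝ)+4)/2) = (v:ℝ) * ((v:ℝ)+2) * c := by
      rw [e2, Real.Gamma_add_one (by positivity), Real.Gamma_add_one (by positivity),
        Real.rpow_add two_pos, Real.rpow_add two_pos, Real.rpow_one, hc]
      ring
    rw [chiCDF, e1, hconst, ← hC]
  rw [eA, eB, eC]
  have hexpr : ((v : ℝ) + 2) * (((v:ℝ) * ((v:ℝ)+2) * c)⁻¹ * C) / (c⁻¹ * A)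
      - (v : ℝ) * (((v:ℝ) * c)⁻¹ * B) ^ 2 / (c⁻¹ * A) ^ 2
      = (A * C - B ^ 2) / ((v:ℝ) * A ^ 2) := by
    field_simp
  rw [hexpr]
  exact div_pos (by linarith) (by positivity)
end

section
/- Let v ≥ 1 be an integer, λ̃ > 0 and ρ > 0 real numbers, and let k ∈ {1,…,v}. Then ∫_{B_v(ρ)} x_k² · (2πλ̃)^{-v/2} · exp(−∑_{i=1}^v x_i²/(2λ̃)) dx = λ̃ · F_{v+2}(ρ/λ̃). Consequently, in Tallis' isotropic limit the truncated second moment satisfies μ_k = λ̃ · F_{v+2}(ρ/λ̃)/F_v(ρ/λ̃). -/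
open Real MeasureTheory

/-!
All integrands depend on `x` only through `t = ∑ xᵢ²` (up to the factor `x_k²`). Polar
coordinates followed by `t = r²` give
`∫_{B_v(ρ)} f (∑ xᵢ²) dx = π^(v/2) / Γ(v/2) · ∫₀^ρ t^(v/2-1) f(t) dt`, and rescaling `t = λ̃ s`
turns the Gaussian moments `∫_{B_v(ρ)} (∑ xᵢ²)^m g` into
`(2λ̃)^m Γ(v/2+m)/Γ(v/2) · F_{v+2m}(ρ/λ̃)`. For `m = 0` this is the mass `F_v(ρ/λ̃)`; for `m = 1`
it is `v λ̃ F_{v+2}(ρ/λ̃)`, and each coordinate carries the share `1/v` of it because permuting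
coordinates preserves the ball and the Gaussian.
-/

open Set

theorem integral_Ioi_pow_mul_comp_sq (n : ℕ) (f : ℝ → ℝ) :
    ∫ y in Ioi (0 : ℝ), y ^ n * f (y ^ 2) =
      (∫ t in Ioi (0 : ℝ), t ^ (((n : ℝ) + 1) / 2 - 1) * f t) / 2 := by
  rw [← integral_comp_rpow_Ioi_of_pos (g := fun t => t ^ (((n : ℝ) + 1) / 2 - 1) * f t) two_pos,
    eq_div_iff two_ne_zero, ← integral_mul_const]
  refine setIntegral_congr_fun measurableSet_Ioi fun y (hy : 0 < y) => ?_
  have hpow : (y ^ (2 : ℝ)) ^ (((n : ℝ) + 1) / 2 - 1) * y = y ^ n := by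
    rw [← rpow_mul hy.le, ← rpow_add_one hy.ne', ← rpow_natCast]
    ring_nf
  rw [smul_eq_mul, show (2 : ℝ) - 1 = 1 by norm_num, rpow_one, ← hpow, rpow_two]
  ring

theorem chiCDF_div {ν l ρ : ℝ} (hl : 0 < l) (hρ : 0 ≤ ρ) :
    chiCDF ν (ρ / l) = ((2 * l) ^ (ν / 2) * Gamma (ν / 2))⁻¹ *
      ∫ t in (0 : ℝ)..ρ, t ^ (ν / 2 - 1) * exp (-t / (2 * l)) := by
  have hsub := intervalIntegral.integral_comp_mul_left (a := 0) (b := ρ / l)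
    (fun t => t ^ (ν / 2 - 1) * exp (-t / (2 * l))) hl.ne'
  rw [mul_zero, mul_div_cancel₀ _ hl.ne'] at hsub
  have hscale : ∀ s ∈ uIcc 0 (ρ / l), (l * s) ^ (ν / 2 - 1) * exp (-(l * s) / (2 * l)) =
      l ^ (ν / 2 - 1) * (s ^ (ν / 2 - 1) * exp (-s / 2)) := fun s hs => by
    rw [uIcc_of_le (by positivity)] at hs
    rw [mul_rpow hl.le hs.1, show -(l * s) / (2 * l) = -s / 2 by field_simp]
    ring
  rw [intervalIntegral.integral_congr hscale, intervalIntegral.integral_const_mul] at hsub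
  have hint : ∫ t in (0 : ℝ)..ρ, t ^ (ν / 2 - 1) * exp (-t / (2 * l)) =
      l ^ (ν / 2) * ∫ s in (0 : ℝ)..ρ / l, s ^ (ν / 2 - 1) * exp (-s / 2) := by
    have hpow : l ^ (ν / 2) = l * l ^ (ν / 2 - 1) := by
      rw [mul_comm, ← rpow_add_one hl.ne', sub_add_cancel]
    rw [hpow, mul_assoc, hsub, smul_eq_mul, mul_inv_cancel_left₀ hl.ne']
  have hlpow : l ^ (ν / 2) ≠ 0 := (rpow_pos_of_pos hl _).ne'
  rw [chiCDF, hint, mul_rpow two_pos.le hl.le, mul_inv, mul_inv, mul_inv]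
  field_simp

section SumSq

variable {ι : Type*} [Fintype ι]

theorem measurableSet_setOf_sum_sq_le (ρ : ℝ) :
    MeasurableSet {y : ι → ℝ | ∑ i, y i ^ 2 ≤ ρ} :=
  measurableSet_le (by fun_prop) measurable_const

theorem isCompact_setOf_sum_sq_le (ρ : ℝ) : IsCompact {y : ι → ℝ | ∑ i, y i ^ 2 ≤ ρ} := by
  refine Metric.isCompact_of_isClosed_isBounded (isClosed_le (by fun_prop) continuous_const)
    ((Metric.isBounded_closedBall (x := 0) (r := √ρ)).subset fun y hy => ?_)
  rw [Metric.mem_closedBall, dist_zero_right, pi_norm_le_iff_of_nonneg (sqrt_nonneg _)]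
  exact fun i => abs_le_sqrt ((Finset.single_le_sum (fun j _ => sq_nonneg (y j))
    (Finset.mem_univ i)).trans hy)

theorem integral_comp_sum_sq [Nonempty ι] (f : ℝ → ℝ) :
    ∫ x : ι → ℝ, f (∑ i, x i ^ 2) =
      π ^ ((Fintype.card ι : ℝ) / 2) / Gamma ((Fintype.card ι : ℝ) / 2) *
        ∫ t in Ioi (0 : ℝ), t ^ ((Fintype.card ι : ℝ) / 2 - 1) * f t := by
  have hd : 1 ≤ Fintype.card ι := Fintype.card_pos
  rw [← (EuclideanSpace.volume_preserving_symm_measurableEquiv_toLp ι).integral_comp']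
  simp only [MeasurableEquiv.toLp_symm_apply, ← EuclideanSpace.real_norm_sq_eq]
  rw [integral_fun_norm_addHaar volume (fun r => f (r ^ 2)), finrank_euclideanSpace,
    measureReal_def, EuclideanSpace.volume_ball]
  simp only [smul_eq_mul]
  rw [integral_Ioi_pow_mul_comp_sq, Nat.cast_sub hd]
  have hsqrt : √π ^ Fintype.card ι = π ^ ((Fintype.card ι : ℝ) / 2) := by
    rw [sqrt_eq_rpow, ← rpow_natCast, ← rpow_mul pi_pos.le]
    ring_nf
  have hd0 : (Fintype.card ι : ℝ) / 2 ≠ 0 := by positivity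
  rw [ENNReal.ofReal_one, one_pow, one_mul, ENNReal.toReal_ofReal (by positivity), hsqrt,
    Gamma_add_one hd0, nsmul_eq_mul, Nat.cast_one, sub_add_cancel]
  field_simp

theorem setIntegral_comp_sum_sq_le [Nonempty ι] (f : ℝ → ℝ) {ρ : ℝ} (hρ : 0 ≤ ρ) :
    ∫ x in {y : ι → ℝ | ∑ i, y i ^ 2 ≤ ρ}, f (∑ i, x i ^ 2) =
      π ^ ((Fintype.card ι : ℝ) / 2) / Gamma ((Fintype.card ι : ℝ) / 2) *
        ∫ t in (0 : ℝ)..ρ, t ^ ((Fintype.card ι : ℝ) / 2 - 1) * f t := by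
  rw [← integral_indicator (measurableSet_setOf_sum_sq_le ρ)]
  have hind : {y : ι → ℝ | ∑ i, y i ^ 2 ≤ ρ}.indicator (fun x => f (∑ i, x i ^ 2)) =
      fun x => (Iic ρ).indicator f (∑ i, x i ^ 2) :=
    funext fun _ => indicator_comp_right (s := Iic ρ) (g := f) (fun y : ι → ℝ => ∑ i, y i ^ 2)
  rw [hind, integral_comp_sum_sq, intervalIntegral.integral_of_le hρ, ← Ioi_inter_Iic,
    ← setIntegral_indicator measurableSet_Iic]
  simp only [indicator_mul_right]

theorem setIntegral_sq_mul_comp_sum_sq_eq (f : ℝ → ℝ) (ρ : ℝ) (j k : ι) :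
    ∫ x in {y : ι → ℝ | ∑ i, y i ^ 2 ≤ ρ}, x j ^ 2 * f (∑ i, x i ^ 2) =
      ∫ x in {y : ι → ℝ | ∑ i, y i ^ 2 ≤ ρ}, x k ^ 2 * f (∑ i, x i ^ 2) := by
  classical
  set e := MeasurableEquiv.piCongrLeft (fun _ : ι => ℝ) (Equiv.swap j k)
  have he : ∀ x i, e x (Equiv.swap j k i) = x i := fun x i =>
    Equiv.piCongrLeft_apply_apply (fun _ : ι => ℝ) (Equiv.swap j k) x i
  have hsum : ∀ x, ∑ i, e x i ^ 2 = ∑ i, x i ^ 2 := fun x => by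
    rw [← Equiv.sum_comp (Equiv.swap j k)]
    simp only [he]
  have hej : ∀ x, e x j = x k := fun x => by simpa using he x k
  have hpre : e ⁻¹' {y : ι → ℝ | ∑ i, y i ^ 2 ≤ ρ} = {y | ∑ i, y i ^ 2 ≤ ρ} := by
    ext x
    simp only [mem_preimage, mem_ofPred_eq, hsum]
  have he_vol : MeasurePreserving e := volume_measurePreserving_piCongrLeft _ _
  rw [← he_vol.setIntegral_preimage_emb e.measurableEmbedding, hpre]
  simp only [hej, hsum]

theorem card_mul_setIntegral_sq_mul_comp_sum_sq {f : ℝ → ℝ} (hf : Continuous f) (ρ : ℝ)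
    (k : ι) :
    Fintype.card ι * ∫ x in {y : ι → ℝ | ∑ i, y i ^ 2 ≤ ρ}, x k ^ 2 * f (∑ i, x i ^ 2) =
      ∫ x in {y : ι → ℝ | ∑ i, y i ^ 2 ≤ ρ}, (∑ i, x i ^ 2) * f (∑ i, x i ^ 2) := by
  have hint : ∀ j : ι, IntegrableOn (fun x : ι → ℝ => x j ^ 2 * f (∑ i, x i ^ 2))
      {y | ∑ i, y i ^ 2 ≤ ρ} := fun j =>
    ContinuousOn.integrableOn_compact (isCompact_setOf_sum_sq_le ρ) (by fun_prop)
  calc Fintype.card ι * ∫ x in {y : ι → ℝ | ∑ i, y i ^ 2 ≤ ρ}, x k ^ 2 * f (∑ i, x i ^ 2)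
      = ∑ j, ∫ x in {y : ι → ℝ | ∑ i, y i ^ 2 ≤ ρ}, x j ^ 2 * f (∑ i, x i ^ 2) := by
        simp only [setIntegral_sq_mul_comp_sum_sq_eq f ρ _ k, Finset.sum_const,
          Finset.card_univ, nsmul_eq_mul]
    _ = ∫ x in {y : ι → ℝ | ∑ i, y i ^ 2 ≤ ρ}, ∑ j, x j ^ 2 * f (∑ i, x i ^ 2) :=
        (integral_finsetSum _ fun j _ => hint j).symm
    _ = _ := by simp only [Finset.sum_mul]

variable [Nonempty ι] {l ρ : ℝ}

theorem setIntegral_sum_sq_pow_mul_gaussian (m : ℕ) (hl : 0 < l) (hρ : 0 ≤ ρ) :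
    ∫ x in {y : ι → ℝ | ∑ i, y i ^ 2 ≤ ρ}, (∑ i, x i ^ 2) ^ m *
        ((2 * π * l) ^ (-(Fintype.card ι : ℝ) / 2) * exp (-(∑ i, x i ^ 2) / (2 * l))) =
      (2 * l) ^ m * (Gamma ((Fintype.card ι : ℝ) / 2 + m) / Gamma ((Fintype.card ι : ℝ) / 2)) *
        chiCDF (Fintype.card ι + 2 * m) (ρ / l) := by
  rw [setIntegral_comp_sum_sq_le
    (fun t => t ^ m * ((2 * π * l) ^ (-(Fintype.card ι : ℝ) / 2) * exp (-t / (2 * l)))) hρ]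
  have hd : 0 < (Fintype.card ι : ℝ) := by positivity
  generalize (Fintype.card ι : ℝ) = d at *
  have hint : ∫ t in (0 : ℝ)..ρ, t ^ (d / 2 - 1) * (t ^ m * exp (-t / (2 * l))) =
      ∫ t in (0 : ℝ)..ρ, t ^ ((d + 2 * m) / 2 - 1) * exp (-t / (2 * l)) := by
    refine intervalIntegral.integral_congr_ae (Filter.Eventually.of_forall fun t ht => ?_)
    rw [uIoc_of_le hρ] at ht
    rw [show (d + 2 * m) / 2 - 1 = d / 2 - 1 + m by ring, rpow_add_natCast ht.1.ne', mul_assoc]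
  simp only [mul_left_comm _ ((2 * π * l) ^ (-d / 2))]
  rw [intervalIntegral.integral_const_mul, hint, chiCDF_div hl hρ]
  have h2l : 0 < 2 * l := by positivity
  have hnorm : (2 * π * l) ^ (-d / 2) = (π ^ (d / 2))⁻¹ * ((2 * l) ^ (d / 2))⁻¹ := by
    rw [show 2 * π * l = π * (2 * l) by ring, neg_div, rpow_neg (by positivity),
      mul_rpow pi_pos.le h2l.le, mul_inv]
  have hsplit : (2 * l) ^ ((d + 2 * m) / 2) = (2 * l) ^ (d / 2) * (2 * l) ^ m := by
    rw [← rpow_add_natCast h2l.ne']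
    ring_nf
  rw [hnorm, hsplit, show (d + 2 * m) / 2 = d / 2 + m by ring]
  have := Gamma_pos_of_pos (half_pos hd)
  have := rpow_pos_of_pos pi_pos (d / 2)
  have := rpow_pos_of_pos h2l (d / 2)
  field_simp

theorem setIntegral_gaussian (hl : 0 < l) (hρ : 0 ≤ ρ) :
    ∫ x in {y : ι → ℝ | ∑ i, y i ^ 2 ≤ ρ},
        (2 * π * l) ^ (-(Fintype.card ι : ℝ) / 2) * exp (-(∑ i, x i ^ 2) / (2 * l)) =
      chiCDF (Fintype.card ι) (ρ / l) := by
  have hΓ : Gamma ((Fintype.card ι : ℝ) / 2) ≠ 0 := (Gamma_pos_of_pos (by positivity)).ne'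
  simpa [hΓ] using setIntegral_sum_sq_pow_mul_gaussian (ι := ι) 0 hl hρ

theorem setIntegral_sq_mul_gaussian (hl : 0 < l) (hρ : 0 ≤ ρ) (k : ι) :
    ∫ x in {y : ι → ℝ | ∑ i, y i ^ 2 ≤ ρ}, x k ^ 2 *
        ((2 * π * l) ^ (-(Fintype.card ι : ℝ) / 2) * exp (-(∑ i, x i ^ 2) / (2 * l))) =
      l * chiCDF (Fintype.card ι + 2) (ρ / l) := by
  have hd : (Fintype.card ι : ℝ) / 2 ≠ 0 := by positivity
  have hΓ : Gamma ((Fintype.card ι : ℝ) / 2) ≠ 0 := (Gamma_pos_of_pos (by positivity)).ne'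
  have hsum := setIntegral_sum_sq_pow_mul_gaussian (ι := ι) 1 hl hρ
  simp only [pow_one, Nat.cast_one, mul_one] at hsum
  rw [← card_mul_setIntegral_sq_mul_comp_sum_sq
      (f := fun t => (2 * π * l) ^ (-(Fintype.card ι : ℝ) / 2) * exp (-t / (2 * l)))
      (by fun_prop) ρ k, Gamma_add_one hd, mul_div_assoc, div_self hΓ] at hsum
  refine mul_left_cancel₀ (by positivity) (hsum.trans ?_)
  ring

end SumSq

/-- Truncated second moment of an isotropic Gaussian over the ball of squared
radius `ρ`: `∫_{B_v(ρ)} x_k² g(x) dx = λ̃·F_{v+2}(ρ/λ̃)`; consequently, the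
truncated second moment in Tallis' isotropic limit is
`μ_k = λ̃·F_{v+2}(ρ/λ̃)/F_v(ρ/λ̃)`. -/
theorem gaussian_ball_second_moment (v : ℕ) (hv : 1 ≤ v) (lamt ρ : ℝ)
    (hl : 0 < lamt) (hρ : 0 < ρ) (k : Fin v) :
    (∫ x in {y : Fin v → ℝ | ∑ i, y i ^ 2 ≤ ρ},
        x k ^ 2 * ((2 * Real.pi * lamt) ^ (-(v : ℝ) / 2) *
          Real.exp (-(∑ i, x i ^ 2) / (2 * lamt))) ∂volume =
      lamt * chiCDF (v + 2) (ρ / lamt))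
    ∧
    (∫ x in {y : Fin v → ℝ | ∑ i, y i ^ 2 ≤ ρ},
        x k ^ 2 * ((2 * Real.pi * lamt) ^ (-(v : ℝ) / 2) *
          Real.exp (-(∑ i, x i ^ 2) / (2 * lamt))) ∂volume) /
      (∫ x in {y : Fin v → ℝ | ∑ i, y i ^ 2 ≤ ρ},
        (2 * Real.pi * lamt) ^ (-(v : ℝ) / 2) *
          Real.exp (-(∑ i, x i ^ 2) / (2 * lamt)) ∂volume) =
      lamt * chiCDF (v + 2) (ρ / lamt) / chiCDF v (ρ / lamt) := by
  have : Nonempty (Fin v) := Fin.pos_iff_nonempty.mp hv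
  have hsecond := setIntegral_sq_mul_gaussian (ι := Fin v) hl hρ.le k
  have hmass := setIntegral_gaussian (ι := Fin v) hl hρ.le
  rw [Fintype.card_fin] at hsecond hmass
  exact ⟨hsecond, by rw [hsecond, hmass]⟩
end

section
/- Let v ≥ 1 be an integer, λ̃ > 0 and ρ > 0 real numbers, and let j, k ∈ {1,…,v}. Then ∫_{B_v(ρ)} x_j² x_k² · (2πλ̃)^{-v/2} · exp(−∑_{i=1}^v x_i²/(2λ̃)) dx = (1 + 2δ_{jk}) · λ̃² · F_{v+4}(ρ/λ̃); in particular the fourth moment with j = k equals 3λ̃²·F_{v+4}(ρ/λ̃) and the mixed moment with j ≠ k equals λ̃²·F_{v+4}(ρ/λ̃). -/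
/-!
The weight `x ↦ 1{‖x‖² ≤ ρ} g(x)`, with `g` the density of `N(0, λ̃ I_v)`, is radial, so the
truncated moments `M j k = ∫ x_j² x_k² 1{‖x‖² ≤ ρ} g(x) dx` are invariant under orthogonal
maps. Permuting coordinates shows that `M j j` does not depend on `j`, and the orthogonal map
`(x_j, x_k) ↦ ((x_j + x_k)/√2, (x_j - x_k)/√2)` turns `x_j² x_k²` into `(x_j² - x_k²)²/4`,
whence `3 M j k = M j j` for `j ≠ k`. Summing over `j, k` expresses `M j j` through the radial
moment `∫ ‖x‖⁴ 1{‖x‖² ≤ ρ} g(x) dx = v(v+2) λ̃² F_{v+4}(ρ/λ̃)`, which polar coordinates and the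
substitution `t = r²/λ̃` evaluate.
-/

open Real MeasureTheory

open Set

theorem integral_comp_linearIsometryEquiv_mul_radial {E : Type*} [NormedAddCommGroup E]
    [InnerProductSpace ℝ E] [FiniteDimensional ℝ E] [MeasurableSpace E] [BorelSpace E]
    (e : E ≃ₗᵢ[ℝ] E) (w : E → ℝ) (φ : ℝ → ℝ) :
    ∫ x, w (e x) * φ ‖x‖ = ∫ x, w x * φ ‖x‖ := by
  simpa only [e.norm_map] using
    e.measurePreserving.integral_comp e.toHomeomorph.measurableEmbedding fun x => w x * φ ‖x‖

section Hadamard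

variable {ι : Type*} [DecidableEq ι]

noncomputable def hadamardPair (a b : ι) :
    EuclideanSpace ℝ ι →ₗ[ℝ] EuclideanSpace ℝ ι where
  toFun x := WithLp.toLp 2 fun i =>
    if i = a then (x a + x b) / √2 else if i = b then (x a - x b) / √2 else x i
  map_add' x y := by
    ext i
    simp only [PiLp.add_apply]
    split_ifs <;> ring
  map_smul' c x := by
    ext i
    simp only [PiLp.smul_apply, smul_eq_mul, RingHom.id_apply]
    split_ifs <;> ring

variable {a b : ι}

theorem hadamardPair_apply_left (x : EuclideanSpace ℝ ι) :
    hadamardPair a b x a = (x a + x b) / √2 := by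
  simp [hadamardPair]

theorem hadamardPair_apply_right (hab : a ≠ b) (x : EuclideanSpace ℝ ι) :
    hadamardPair a b x b = (x a - x b) / √2 := by
  simp [hadamardPair, hab.symm]

variable [Fintype ι]

theorem norm_hadamardPair (hab : a ≠ b) (x : EuclideanSpace ℝ ι) :
    ‖hadamardPair a b x‖ = ‖x‖ := by
  have hsq : ‖hadamardPair a b x‖ ^ 2 = ‖x‖ ^ 2 := by
    rw [EuclideanSpace.real_norm_sq_eq, EuclideanSpace.real_norm_sq_eq, ← sub_eq_zero,
      ← Finset.sum_sub_distrib, Fintype.sum_eq_add a b hab fun i hi => by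
        simp [hadamardPair, hi.1, hi.2], hadamardPair_apply_left, hadamardPair_apply_right hab,
      div_pow, div_pow, sq_sqrt zero_le_two]
    ring
  exact (pow_left_inj₀ (norm_nonneg _) (norm_nonneg _) two_ne_zero).1 hsq

noncomputable def hadamardPairIsometry (hab : a ≠ b) :
    EuclideanSpace ℝ ι ≃ₗᵢ[ℝ] EuclideanSpace ℝ ι :=
  LinearIsometry.toLinearIsometryEquiv ⟨hadamardPair a b, norm_hadamardPair hab⟩ rfl

end Hadamard

section Isotropy

variable {ι : Type*} [Fintype ι] (φ : ℝ → ℝ)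

theorem integrable_sq_mul_sq_mul_radial (hφ : Measurable φ)
    (hint : Integrable fun x : EuclideanSpace ℝ ι => ‖x‖ ^ 4 * φ ‖x‖) (a b : ι) :
    Integrable fun x : EuclideanSpace ℝ ι => x a ^ 2 * x b ^ 2 * φ ‖x‖ := by
  refine hint.mono (by fun_prop) (Filter.Eventually.of_forall fun x => ?_)
  have hxa := PiLp.norm_apply_le x a
  have hxb := PiLp.norm_apply_le x b
  simp only [norm_mul, norm_pow, norm_norm]
  gcongr
  calc ‖x a‖ ^ 2 * ‖x b‖ ^ 2 ≤ ‖x‖ ^ 2 * ‖x‖ ^ 2 := by gcongr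
    _ = ‖x‖ ^ 4 := by ring

theorem sum_integral_sq_mul_sq_mul_radial (hφ : Measurable φ)
    (hint : Integrable fun x : EuclideanSpace ℝ ι => ‖x‖ ^ 4 * φ ‖x‖) :
    ∑ a, ∑ b, ∫ x : EuclideanSpace ℝ ι, x a ^ 2 * x b ^ 2 * φ ‖x‖ =
      ∫ x : EuclideanSpace ℝ ι, ‖x‖ ^ 4 * φ ‖x‖ := by
  have hI := integrable_sq_mul_sq_mul_radial φ hφ hint
  simp_rw [← integral_finsetSum _ fun b _ => hI _ b]
  rw [← integral_finsetSum _ fun a _ => integrable_finsetSum _ fun b _ => hI a b]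
  congr 1 with x
  rw [show ‖x‖ ^ 4 = ‖x‖ ^ 2 * ‖x‖ ^ 2 by ring, EuclideanSpace.real_norm_sq_eq,
    Finset.sum_mul_sum]
  simp only [Finset.sum_mul]

variable [DecidableEq ι]

theorem integral_sq_mul_sq_mul_radial_diag_eq (a b : ι) :
    ∫ x : EuclideanSpace ℝ ι, x a ^ 2 * x a ^ 2 * φ ‖x‖ =
      ∫ x : EuclideanSpace ℝ ι, x b ^ 2 * x b ^ 2 * φ ‖x‖ := by
  rw [← integral_comp_linearIsometryEquiv_mul_radial
    (LinearIsometryEquiv.piLpCongrLeft 2 ℝ ℝ (Equiv.swap a b))]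
  simp [Equiv.piCongrLeft']

theorem integral_sq_mul_sq_mul_radial_of_ne (hφ : Measurable φ)
    (hint : Integrable fun x : EuclideanSpace ℝ ι => ‖x‖ ^ 4 * φ ‖x‖) {a b : ι} (hab : a ≠ b) :
    3 * ∫ x : EuclideanSpace ℝ ι, x a ^ 2 * x b ^ 2 * φ ‖x‖ =
      ∫ x : EuclideanSpace ℝ ι, x a ^ 2 * x a ^ 2 * φ ‖x‖ := by
  have hI := integrable_sq_mul_sq_mul_radial φ hφ hint
  have hrot := integral_comp_linearIsometryEquiv_mul_radial (hadamardPairIsometry hab)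
    (fun x => x a ^ 2 * x b ^ 2) φ
  have hpt : ∀ x : EuclideanSpace ℝ ι,
      hadamardPairIsometry hab x a ^ 2 * hadamardPairIsometry hab x b ^ 2 * φ ‖x‖ =
        4⁻¹ * (x a ^ 2 * x a ^ 2 * φ ‖x‖) + 4⁻¹ * (x b ^ 2 * x b ^ 2 * φ ‖x‖) -
          2⁻¹ * (x a ^ 2 * x b ^ 2 * φ ‖x‖) := fun x => by
    change hadamardPair a b x a ^ 2 * hadamardPair a b x b ^ 2 * φ ‖x‖ = _
    rw [hadamardPair_apply_left, hadamardPair_apply_right hab, div_pow, div_pow,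
      sq_sqrt zero_le_two]
    ring
  simp only [hpt] at hrot
  rw [integral_sub, integral_add, integral_const_mul, integral_const_mul, integral_const_mul,
    integral_sq_mul_sq_mul_radial_diag_eq φ b a] at hrot
  · linarith
  exacts [(hI a a).const_mul _, (hI b b).const_mul _,
    ((hI a a).const_mul _).add ((hI b b).const_mul _), (hI a b).const_mul _]

theorem integral_sq_mul_sq_mul_radial (hφ : Measurable φ)
    (hint : Integrable fun x : EuclideanSpace ℝ ι => ‖x‖ ^ 4 * φ ‖x‖) (a b : ι) :
    ∫ x : EuclideanSpace ℝ ι, x a ^ 2 * x b ^ 2 * φ ‖x‖ =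
      (1 + 2 * if a = b then 1 else 0) / (Fintype.card ι * (Fintype.card ι + 2)) *
        ∫ x : EuclideanSpace ℝ ι, ‖x‖ ^ 4 * φ ‖x‖ := by
  set A := ∫ x : EuclideanSpace ℝ ι, x a ^ 2 * x a ^ 2 * φ ‖x‖
  have hM : ∀ c d : ι, ∫ x : EuclideanSpace ℝ ι, x c ^ 2 * x d ^ 2 * φ ‖x‖ =
      A / 3 * (1 + 2 * if c = d then 1 else 0) := by
    intro c d
    rcases eq_or_ne c d with rfl | hcd
    · rw [integral_sq_mul_sq_mul_radial_diag_eq φ c a, if_pos rfl]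
      ring
    · have := integral_sq_mul_sq_mul_radial_of_ne φ hφ hint hcd
      rw [integral_sq_mul_sq_mul_radial_diag_eq φ c a] at this
      rw [if_neg hcd]
      linarith
  have hsum := sum_integral_sq_mul_sq_mul_radial φ hφ hint
  simp only [hM, ← Finset.mul_sum, Finset.sum_add_distrib, Finset.sum_ite_eq,
    Finset.mem_univ, if_true, Finset.sum_const, Finset.card_univ, nsmul_eq_mul] at hsum
  have hn : (0 : ℝ) < Fintype.card ι := Nat.cast_pos.2 (Fintype.card_pos_iff.2 ⟨a⟩)
  rw [hM, ← hsum]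
  field_simp

end Isotropy

theorem integral_pow_mul_exp_neg_sq_eq_chiCDF {ν : ℕ} (hν : 1 ≤ ν) {l ρ : ℝ} (hl : 0 < l)
    (hρ : 0 ≤ ρ) :
    ∫ y in (0 : ℝ)..√ρ, y ^ (ν - 1) * exp (-y ^ 2 / (2 * l)) =
      2 ^ ((ν : ℝ) / 2 - 1) * Gamma (ν / 2) * l ^ ((ν : ℝ) / 2) * chiCDF ν (ρ / l) := by
  have hsubst := intervalIntegral.integral_deriv_smul_comp_of_deriv_nonneg
    (f := fun y : ℝ => y ^ 2 / l) (f' := fun y => 2 * y / l)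
    (g := fun t : ℝ => t ^ ((ν : ℝ) / 2 - 1) * exp (-t / 2)) (by fun_prop)
    (fun y _ => by simpa [mul_comm] using (hasDerivAt_pow 2 y).div_const l)
    (fun y hy => by
      rw [min_eq_left (sqrt_nonneg ρ)] at hy
      exact div_nonneg (by linarith [hy.1]) hl.le)
  have hpt : ∀ y : ℝ, 0 < y →
      (2 * y / l) • ((y ^ 2 / l) ^ ((ν : ℝ) / 2 - 1) * exp (-(y ^ 2 / l) / 2)) =
        2 / l ^ ((ν : ℝ) / 2) * (y ^ (ν - 1) * exp (-y ^ 2 / (2 * l))) := by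
    intro y hy
    rw [div_rpow (sq_nonneg y) hl.le, ← rpow_natCast y 2, ← rpow_mul hy.le,
      show ((2 : ℕ) : ℝ) * ((ν : ℝ) / 2 - 1) = (ν - 1 : ℕ) - 1 by push_cast [hν]; ring,
      rpow_sub_one hy.ne', rpow_natCast, rpow_sub_one hl.ne', smul_eq_mul]
    have : 0 < l ^ ((ν : ℝ) / 2) := rpow_pos_of_pos hl _
    field_simp
  simp only [Function.comp_def] at hsubst
  rw [intervalIntegral.integral_congr_ae (g := fun y => 2 / l ^ ((ν : ℝ) / 2) *
      (y ^ (ν - 1) * exp (-y ^ 2 / (2 * l)))) (Filter.Eventually.of_forall fun y hy => hpt y ?_),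
    intervalIntegral.integral_const_mul, zero_pow two_ne_zero, zero_div, sq_sqrt hρ] at hsubst
  · rw [chiCDF, ← hsubst, rpow_sub_one two_ne_zero]
    have : 0 < l ^ ((ν : ℝ) / 2) := rpow_pos_of_pos hl _
    have : 0 < Gamma ((ν : ℝ) / 2) := Gamma_pos_of_pos (by positivity)
    have : (0 : ℝ) < 2 ^ ((ν : ℝ) / 2) := rpow_pos_of_pos two_pos _
    field_simp
  · rw [uIoc_of_le (sqrt_nonneg ρ)] at hy
    exact hy.1

-- The density of `N(0, l • I_n)` at a point `x` with `‖x‖² = s`.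
noncomputable def isoGaussianDensity (n : ℕ) (l s : ℝ) : ℝ :=
  (2 * π * l) ^ (-(n : ℝ) / 2) * exp (-s / (2 * l))

theorem integral_norm_pow_mul_indicator_Iic_norm_sq {ι : Type*} [Fintype ι] [Nonempty ι]
    (k : ℕ) (h : ℝ → ℝ) (ρ : ℝ) :
    ∫ x : EuclideanSpace ℝ ι, ‖x‖ ^ k * (Iic ρ).indicator h (‖x‖ ^ 2) =
      Fintype.card ι * (√π ^ Fintype.card ι / Gamma (Fintype.card ι / 2 + 1)) *
        ∫ y in (0 : ℝ)..√ρ, y ^ (Fintype.card ι + k - 1) * h (y ^ 2) := by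
  have hn : 1 ≤ Fintype.card ι := Fintype.card_pos
  have hball : volume.real (Metric.ball (0 : EuclideanSpace ℝ ι) 1) =
      √π ^ Fintype.card ι / Gamma (Fintype.card ι / 2 + 1) := by
    rw [measureReal_def, EuclideanSpace.volume_ball, ENNReal.ofReal_one, one_pow, one_mul,
      ENNReal.toReal_ofReal (by positivity)]
  rw [integral_fun_norm_addHaar volume fun r => r ^ k * (Iic ρ).indicator h (r ^ 2),
    finrank_euclideanSpace, hball, nsmul_eq_mul, smul_eq_mul,
    intervalIntegral.integral_of_le (sqrt_nonneg ρ), ← Ioi_inter_Iic,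
    ← setIntegral_indicator measurableSet_Iic, mul_assoc]
  congr 2
  refine setIntegral_congr_fun measurableSet_Ioi fun y (hy : 0 < y) => ?_
  by_cases hyρ : y ≤ √ρ
  · rw [indicator_of_mem (show y ^ 2 ∈ Iic ρ from (le_sqrt' hy).1 hyρ),
      indicator_of_mem (show y ∈ Iic √ρ from hyρ), smul_eq_mul,
      show Fintype.card ι + k - 1 = Fintype.card ι - 1 + k by omega, pow_add, mul_assoc]
  · rw [indicator_of_notMem (show y ^ 2 ∉ Iic ρ from fun h => hyρ ((le_sqrt' hy).2 h)),
      indicator_of_notMem (show y ∉ Iic √ρ from hyρ), mul_zero, smul_zero]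

theorem integral_norm_pow_mul_indicator_isoGaussianDensity {ι : Type*} [Fintype ι] [Nonempty ι]
    (m : ℕ) {l ρ : ℝ} (hl : 0 < l) (hρ : 0 ≤ ρ) :
    ∫ x : EuclideanSpace ℝ ι, ‖x‖ ^ (2 * m) *
        (Iic ρ).indicator (isoGaussianDensity (Fintype.card ι) l) (‖x‖ ^ 2) =
      (2 * l) ^ m * Gamma (Fintype.card ι / 2 + m) / Gamma (Fintype.card ι / 2) *
        chiCDF (Fintype.card ι + 2 * m) (ρ / l) := by
  set n := Fintype.card ι
  have hn : 1 ≤ n := Fintype.card_pos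
  simp only [integral_norm_pow_mul_indicator_Iic_norm_sq, isoGaussianDensity,
    mul_left_comm _ ((2 * π * l) ^ (-(n : ℝ) / 2))]
  rw [intervalIntegral.integral_const_mul, integral_pow_mul_exp_neg_sq_eq_chiCDF (by omega) hl hρ]
  have hν : ((n + 2 * m : ℕ) : ℝ) / 2 = n / 2 + m := by push_cast; ring
  have hC : (2 * π * l) ^ (-(n : ℝ) / 2) =
      (2 ^ ((n : ℝ) / 2) * π ^ ((n : ℝ) / 2) * l ^ ((n : ℝ) / 2))⁻¹ := by
    rw [neg_div, rpow_neg (by positivity), mul_rpow (by positivity) hl.le,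
      mul_rpow zero_le_two pi_pos.le]
  have hπ : √π ^ n = π ^ ((n : ℝ) / 2) := by
    rw [sqrt_eq_rpow, ← rpow_natCast, ← rpow_mul pi_pos.le, one_div_mul_eq_div]
  rw [hν, hC, hπ, rpow_sub_one two_ne_zero, rpow_add two_pos, rpow_add hl, rpow_natCast,
    rpow_natCast, Gamma_add_one (by positivity), Nat.cast_add, Nat.cast_mul, Nat.cast_two]
  have : 0 < Gamma ((n : ℝ) / 2) := Gamma_pos_of_pos (by positivity)
  have : 0 < l ^ ((n : ℝ) / 2) := rpow_pos_of_pos hl _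
  have : (0 : ℝ) < 2 ^ ((n : ℝ) / 2) := rpow_pos_of_pos two_pos _
  have : (0 : ℝ) < π ^ ((n : ℝ) / 2) := rpow_pos_of_pos pi_pos _
  field_simp
  ring

theorem integrable_mul_indicator_Iic_norm_sq {E : Type*} [NormedAddCommGroup E] [ProperSpace E]
    [MeasurableSpace E] [OpensMeasurableSpace E] (μ : Measure E) [IsFiniteMeasureOnCompacts μ]
    {w : E → ℝ} {h : ℝ → ℝ} (hw : Continuous w) (hh : Continuous h) {ρ : ℝ} (hρ : 0 ≤ ρ) :
    Integrable (fun x => w x * (Iic ρ).indicator h (‖x‖ ^ 2)) μ := by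
  have hball : (fun x => w x * (Iic ρ).indicator h (‖x‖ ^ 2)) =
      (Metric.closedBall 0 √ρ).indicator fun x => w x * h (‖x‖ ^ 2) := by
    ext x
    by_cases hx : ‖x‖ ^ 2 ≤ ρ
    · have hx' : x ∈ Metric.closedBall (0 : E) √ρ := by
        rwa [mem_closedBall_zero_iff, le_sqrt (norm_nonneg x) hρ]
      rw [indicator_of_mem (show ‖x‖ ^ 2 ∈ Iic ρ from hx), indicator_of_mem hx']
    · have hx' : x ∉ Metric.closedBall (0 : E) √ρ := by
        rwa [mem_closedBall_zero_iff, le_sqrt (norm_nonneg x) hρ]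
      rw [indicator_of_notMem (show ‖x‖ ^ 2 ∉ Iic ρ from hx), indicator_of_notMem hx', mul_zero]
  rw [hball, integrable_indicator_iff Metric.isClosed_closedBall.measurableSet]
  exact (hw.mul (hh.comp (by fun_prop))).continuousOn.integrableOn_compact
    (isCompact_closedBall 0 √ρ)

theorem setIntegral_sum_sq_le_eq_integral {ι : Type*} [Fintype ι] (ρ : ℝ)
    (w : (ι → ℝ) → ℝ) (h : ℝ → ℝ) :
    ∫ x in {y : ι → ℝ | ∑ i, y i ^ 2 ≤ ρ}, w x * h (∑ i, x i ^ 2) =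
      ∫ x : EuclideanSpace ℝ ι, w x.ofLp * (Iic ρ).indicator h (‖x‖ ^ 2) := by
  rw [← integral_indicator (measurableSet_le (by fun_prop) measurable_const),
    ← (PiLp.volume_preserving_toLp ι).integral_comp
      (MeasurableEquiv.toLp 2 (ι → ℝ)).measurableEmbedding]
  congr 1 with x
  simp only [EuclideanSpace.real_norm_sq_eq, indicator_apply, mem_ofPred_eq, mem_Iic]
  split_ifs <;> simp

theorem setIntegral_sq_mul_sq_mul_isoGaussianDensity {ι : Type*} [Fintype ι] [DecidableEq ι]
    [Nonempty ι] {l ρ : ℝ} (hl : 0 < l) (hρ : 0 ≤ ρ) (a b : ι) :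
    ∫ x in {y : ι → ℝ | ∑ i, y i ^ 2 ≤ ρ},
        x a ^ 2 * x b ^ 2 * isoGaussianDensity (Fintype.card ι) l (∑ i, x i ^ 2) =
      (1 + 2 * if a = b then 1 else 0) * l ^ 2 * chiCDF (Fintype.card ι + 4) (ρ / l) := by
  set n := Fintype.card ι
  have hn : (0 : ℝ) < n := Nat.cast_pos.2 Fintype.card_pos
  have hφ : Measurable fun r : ℝ => (Iic ρ).indicator (isoGaussianDensity n l) (r ^ 2) :=
    ((by unfold isoGaussianDensity; fun_prop : Measurable (isoGaussianDensity n l)).indicator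
      measurableSet_Iic).comp (by fun_prop)
  have hint := integrable_mul_indicator_Iic_norm_sq volume
    (by fun_prop : Continuous fun x : EuclideanSpace ℝ ι => ‖x‖ ^ 4)
    (by unfold isoGaussianDensity; fun_prop : Continuous (isoGaussianDensity n l)) hρ
  have hrad := integral_norm_pow_mul_indicator_isoGaussianDensity (ι := ι) 2 hl hρ
  norm_num at hrad
  have hΓ : Gamma ((n : ℝ) / 2 + 2) =
      ((n : ℝ) / 2 + 1) * ((n : ℝ) / 2) * Gamma ((n : ℝ) / 2) := by
    rw [show (n : ℝ) / 2 + 2 = (n / 2 + 1) + 1 by ring, Gamma_add_one (by positivity),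
      Gamma_add_one (by positivity)]
    ring
  rw [setIntegral_sum_sq_le_eq_integral, integral_sq_mul_sq_mul_radial _ hφ hint, hrad, hΓ]
  field_simp
  ring

theorem gaussian_ball_fourth_moment_general (v : ℕ) (lamt ρ : ℝ)
    (hl : 0 < lamt) (hρ : 0 < ρ) (j k : Fin v) :
    (∫ x in {y : Fin v → ℝ | ∑ i, y i ^ 2 ≤ ρ},
        x j ^ 2 * x k ^ 2 * ((2 * Real.pi * lamt) ^ (-(v : ℝ) / 2) *
          Real.exp (-(∑ i, x i ^ 2) / (2 * lamt))) ∂volume =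
      (1 + 2 * (if j = k then (1 : ℝ) else 0)) * lamt ^ 2 * chiCDF (v + 4) (ρ / lamt))
    ∧
    (j = k →
      ∫ x in {y : Fin v → ℝ | ∑ i, y i ^ 2 ≤ ρ},
          x j ^ 2 * x k ^ 2 * ((2 * Real.pi * lamt) ^ (-(v : ℝ) / 2) *
            Real.exp (-(∑ i, x i ^ 2) / (2 * lamt))) ∂volume =
        3 * lamt ^ 2 * chiCDF (v + 4) (ρ / lamt))
    ∧
    (j ≠ k →
      ∫ x in {y : Fin v → ℝ | ∑ i, y i ^ 2 ≤ ρ},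
          x j ^ 2 * x k ^ 2 * ((2 * Real.pi * lamt) ^ (-(v : ℝ) / 2) *
            Real.exp (-(∑ i, x i ^ 2) / (2 * lamt))) ∂volume =
        lamt ^ 2 * chiCDF (v + 4) (ρ / lamt)) := by
  have : Nonempty (Fin v) := ⟨j⟩
  have h := setIntegral_sq_mul_sq_mul_isoGaussianDensity hl hρ.le j k
  simp only [Fintype.card_fin, isoGaussianDensity] at h
  refine ⟨h, fun hjk => ?_, fun hjk => ?_⟩
  · rw [h, if_pos hjk]
    ring
  · rw [h, if_neg hjk]
    ring

/-- Truncated fourth moments of an isotropic Gaussian over the ball of squared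
radius `ρ`: `∫_{B_v(ρ)} x_j² x_k² g(x) dx = (1+2δ_{jk})·λ̃²·F_{v+4}(ρ/λ̃)`;
in particular the fourth moment (`j = k`) equals `3λ̃²·F_{v+4}(ρ/λ̃)` and the
mixed moment (`j ≠ k`) equals `λ̃²·F_{v+4}(ρ/λ̃)`. -/
theorem gaussian_ball_fourth_moment (v : ℕ) (hv : 1 ≤ v) (lamt ρ : ℝ)
    (hl : 0 < lamt) (hρ : 0 < ρ) (j k : Fin v) :
    (∫ x in {y : Fin v → ℝ | ∑ i, y i ^ 2 ≤ ρ},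
        x j ^ 2 * x k ^ 2 * ((2 * Real.pi * lamt) ^ (-(v : ℝ) / 2) *
          Real.exp (-(∑ i, x i ^ 2) / (2 * lamt))) ∂volume =
      (1 + 2 * (if j = k then (1 : ℝ) else 0)) * lamt ^ 2 * chiCDF (v + 4) (ρ / lamt))
    ∧
    (j = k →
      ∫ x in {y : Fin v → ℝ | ∑ i, y i ^ 2 ≤ ρ},
          x j ^ 2 * x k ^ 2 * ((2 * Real.pi * lamt) ^ (-(v : ℝ) / 2) *
            Real.exp (-(∑ i, x i ^ 2) / (2 * lamt))) ∂volume =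
        3 * lamt ^ 2 * chiCDF (v + 4) (ρ / lamt))
    ∧
    (j ≠ k →
      ∫ x in {y : Fin v → ℝ | ∑ i, y i ^ 2 ≤ ρ},
          x j ^ 2 * x k ^ 2 * ((2 * Real.pi * lamt) ^ (-(v : ℝ) / 2) *
            Real.exp (-(∑ i, x i ^ 2) / (2 * lamt))) ∂volume =
        lamt ^ 2 * chiCDF (v + 4) (ρ / lamt)) :=
  gaussian_ball_fourth_moment_general v lamt ρ hl hρ j k
end
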